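/- For 0 ≤ k ≤ m, the identity (y+z+1)_m (y+z+1/2)_k / (2y+2z+1)_k = 4^{-k} (y+z+1+k)_{m-k} (2y+2z+1+k)_k holds; and for m+1 ≤ k ≤ 2m+1, (y+z+1)_m (y+z+1/2)_k / (2y+2z+1)_k = 2^{-2m-1} (2y+2z+1+k)_{2m+1-k} (y+z+m+3/2)_{k-m-1}. In particular Q1(y) := (y+z+1)_m (y+z+1/2)_k / (2y+2z+1)_k is a polynomial in y of degree m for each fixed k with 0 ≤ k ≤ 2m+1. -/
import Mathlib

/-- The rising factorial (Pochhammer symbol) `(a)_k`. -/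
noncomputable def rf (a : ℂ) (k : ℕ) : ℂ := (ascPochhammer ℂ k).eval a

lemma rf_zero (a : ℂ) : rf a 0 = 1 := by simp [rf]

lemma rf_succ (a : ℂ) (n : ℕ) : rf a (n + 1) = rf a n * (a + n) := by
  simp [rf, ascPochhammer_succ_right]

lemma rf_add (a : ℂ) (n m : ℕ) : rf a (n + m) = rf a n * rf (a + n) m := by
  unfold rf
  rw [← ascPochhammer_mul]
  simp [Polynomial.eval_comp]

lemma dup_even (a : ℂ) (k : ℕ) :
    rf (2 * a + 1) (2 * k) = 4 ^ k * rf (a + 1 / 2) k * rf (a + 1) k := by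
  induction k with
  | zero => simp [rf_zero]
  | succ n ih =>
      have h1 : 2 * (n + 1) = 2 * n + 1 + 1 := by ring
      rw [h1, rf_succ, rf_succ, ih, rf_succ, rf_succ]
      push_cast
      ring

lemma dup_odd (a : ℂ) (m : ℕ) :
    rf (2 * a + 1) (2 * m + 1) = 2 ^ (2 * m + 1) * rf (a + 1 / 2) (m + 1) * rf (a + 1) m := by
  rw [rf_succ, dup_even, rf_succ,
    show (2:ℂ)^(2*m+1) = 4^m * 2 by rw [pow_succ, show (4:ℂ)=2^2 by norm_num, ← pow_mul]]
  push_cast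
  ring

lemma mult1 (m k : ℕ) (hkm : k ≤ m) (y z : ℂ) :
    rf (y+z+1) m * rf (y+z+1/2) k * 4^k
      = rf (y+z+1+k) (m-k) * rf (2*y+2*z+1+k) k * rf (2*y+2*z+1) k := by
  have h1 : rf (y+z+1) m = rf (y+z+1) k * rf (y+z+1+k) (m-k) := by
    rw [← rf_add]; congr 1; omega
  have h2 : rf (2*y+2*z+1) k * rf (2*y+2*z+1+k) k = rf (2*y+2*z+1) (2*k) := by
    have := rf_add (2*y+2*z+1) k k
    rw [show k + k = 2*k by ring] at this
    exact this.symm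
  have h3 := dup_even (y+z) k
  rw [show (2*(y+z)+1 : ℂ) = 2*y+2*z+1 by ring] at h3
  rw [h1]
  linear_combination (-(rf (y+z+1+k) (m-k))) * (h2.trans h3)

lemma mult2 (m k : ℕ) (h1 : m+1 ≤ k) (h2 : k ≤ 2*m+1) (y z : ℂ) :
    rf (y+z+1) m * rf (y+z+1/2) k * 2^(2*m+1)
      = rf (2*y+2*z+1+k) (2*m+1-k) * rf (y+z+m+3/2) (k-(m+1)) * rf (2*y+2*z+1) k := by
  have ha : rf (y+z+1/2) k = rf (y+z+1/2) (m+1) * rf (y+z+1/2+(m+1:ℕ)) (k-(m+1)) := by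
    rw [← rf_add]; congr 1; omega
  rw [show (y+z+1/2+((m+1:ℕ):ℂ)) = y+z+m+3/2 by push_cast; ring] at ha
  have hb : rf (2*y+2*z+1) k * rf (2*y+2*z+1+k) (2*m+1-k) = rf (2*y+2*z+1) (2*m+1) := by
    rw [← rf_add]; congr 1; omega
  have hc := dup_odd (y+z) m
  rw [show (2*(y+z)+1 : ℂ) = 2*y+2*z+1 by ring] at hc
  rw [ha]
  linear_combination (-(rf (y+z+m+3/2) (k-(m+1)))) * (hb.trans hc)

open Polynomial in
lemma comp_lin (n : ℕ) (b c : ℂ) (hb : b ≠ 0) :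
    (ascPochhammer ℂ n).comp (C b * X + C c) ≠ 0 ∧
    ((ascPochhammer ℂ n).comp (C b * X + C c)).natDegree = n := by
  have hq : (C b * X + C c).natDegree = 1 := natDegree_linear hb
  constructor
  · rw [← leadingCoeff_ne_zero, leadingCoeff_comp (by rw [hq]; norm_num)]
    apply mul_ne_zero
    · rw [(monic_ascPochhammer ℂ n).leadingCoeff]; exact one_ne_zero
    · exact pow_ne_zero _ (by rw [leadingCoeff_linear hb]; exact hb)
  · rw [natDegree_comp, ascPochhammer_natDegree, hq, mul_one]

open Polynomial in
lemma degree_aux (n1 n2 : ℕ) (e b1 c1 b2 c2 : ℂ) (he : e ≠ 0) (hb1 : b1 ≠ 0) (hb2 : b2 ≠ 0) :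
    (C e * (ascPochhammer ℂ n1).comp (C b1 * X + C c1) *
      (ascPochhammer ℂ n2).comp (C b2 * X + C c2)).degree = (n1 + n2 : ℕ) := by
  obtain ⟨hne1, hd1⟩ := comp_lin n1 b1 c1 hb1
  obtain ⟨hne2, hd2⟩ := comp_lin n2 b2 c2 hb2
  have hP : C e * (ascPochhammer ℂ n1).comp (C b1 * X + C c1) *
      (ascPochhammer ℂ n2).comp (C b2 * X + C c2) ≠ 0 :=
    mul_ne_zero (mul_ne_zero (C_ne_zero.mpr he) hne1) hne2
  rw [degree_eq_natDegree hP, natDegree_mul (mul_ne_zero (C_ne_zero.mpr he) hne1) hne2,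
    natDegree_mul (C_ne_zero.mpr he) hne1, natDegree_C, hd1, hd2, zero_add]

theorem Q1_identities_and_poly (m k : ℕ) (hk : k ≤ 2 * m + 1) (z : ℂ) :
    (∀ y : ℂ, k ≤ m → rf (2 * y + 2 * z + 1) k ≠ 0 →
        rf (y + z + 1) m * rf (y + z + 1 / 2) k / rf (2 * y + 2 * z + 1) k
          = ((4 : ℂ) ^ k)⁻¹ * rf (y + z + 1 + k) (m - k) * rf (2 * y + 2 * z + 1 + k) k) ∧
    (∀ y : ℂ, m + 1 ≤ k → rf (2 * y + 2 * z + 1) k ≠ 0 →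
        rf (y + z + 1) m * rf (y + z + 1 / 2) k / rf (2 * y + 2 * z + 1) k
          = ((2 : ℂ) ^ (2 * m + 1))⁻¹ * rf (2 * y + 2 * z + 1 + k) (2 * m + 1 - k) *
              rf (y + z + m + 3 / 2) (k - (m + 1))) ∧
    (∃ P : Polynomial ℂ, P.degree = m ∧
      ∀ y : ℂ, rf (2 * y + 2 * z + 1) k ≠ 0 →
        P.eval y = rf (y + z + 1) m * rf (y + z + 1 / 2) k / rf (2 * y + 2 * z + 1) k) := by
  have h4 : (4:ℂ)^k ≠ 0 := pow_ne_zero _ (by norm_num)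
  have h2p : (2:ℂ)^(2*m+1) ≠ 0 := pow_ne_zero _ (by norm_num)
  have part1 : ∀ y : ℂ, k ≤ m → rf (2 * y + 2 * z + 1) k ≠ 0 →
      rf (y + z + 1) m * rf (y + z + 1 / 2) k / rf (2 * y + 2 * z + 1) k
        = ((4 : ℂ) ^ k)⁻¹ * rf (y + z + 1 + k) (m - k) * rf (2 * y + 2 * z + 1 + k) k := by
    intro y hkm h
    rw [div_eq_iff h]
    linear_combination ((4:ℂ)^k)⁻¹ * mult1 m k hkm y z
      - rf (y+z+1) m * rf (y+z+1/2) k * (mul_inv_cancel₀ h4)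
  have part2 : ∀ y : ℂ, m + 1 ≤ k → rf (2 * y + 2 * z + 1) k ≠ 0 →
      rf (y + z + 1) m * rf (y + z + 1 / 2) k / rf (2 * y + 2 * z + 1) k
        = ((2 : ℂ) ^ (2 * m + 1))⁻¹ * rf (2 * y + 2 * z + 1 + k) (2 * m + 1 - k) *
            rf (y + z + m + 3 / 2) (k - (m + 1)) := by
    intro y hmk h
    rw [div_eq_iff h]
    linear_combination ((2:ℂ)^(2*m+1))⁻¹ * mult2 m k hmk hk y z
      - rf (y+z+1) m * rf (y+z+1/2) k * (mul_inv_cancel₀ h2p)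
  refine ⟨part1, part2, ?_⟩
  by_cases hkm : k ≤ m
  · refine ⟨Polynomial.C ((4:ℂ)^k)⁻¹ *
        (ascPochhammer ℂ (m-k)).comp (Polynomial.C 1 * Polynomial.X + Polynomial.C (z+1+k)) *
        (ascPochhammer ℂ k).comp (Polynomial.C 2 * Polynomial.X + Polynomial.C (2*z+1+k)), ?_, ?_⟩
    · rw [degree_aux _ _ _ _ _ _ _ (inv_ne_zero h4) one_ne_zero two_ne_zero,
        show m - k + k = m by omega]
    · intro y h
      rw [part1 y hkm h]
      simp only [Polynomial.eval_mul, Polynomial.eval_add, Polynomial.eval_comp,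
        Polynomial.eval_C, Polynomial.eval_X, rf]
      rw [show (1:ℂ)*y + (z+1+k) = y+z+1+k by ring,
        show (2:ℂ)*y + (2*z+1+k) = 2*y+2*z+1+k by ring]
  · push_neg at hkm
    refine ⟨Polynomial.C ((2:ℂ)^(2*m+1))⁻¹ *
        (ascPochhammer ℂ (2*m+1-k)).comp (Polynomial.C 2 * Polynomial.X + Polynomial.C (2*z+1+k)) *
        (ascPochhammer ℂ (k-(m+1))).comp (Polynomial.C 1 * Polynomial.X + Polynomial.C (z+m+3/2)), ?_, ?_⟩
    · rw [degree_aux _ _ _ _ _ _ _ (inv_ne_zero h2p) two_ne_zero one_ne_zero,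
        show 2*m+1-k + (k-(m+1)) = m by omega]
    · intro y h
      rw [part2 y hkm h]
      simp only [Polynomial.eval_mul, Polynomial.eval_add, Polynomial.eval_comp,
        Polynomial.eval_C, Polynomial.eval_X, rf]
      rw [show (2:ℂ)*y + (2*z+1+k) = 2*y+2*z+1+k by ring,
        show (1:ℂ)*y + (z+m+3/2) = y+z+m+3/2 by ring]
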